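/- The function ψ(t) = |cos(n t)| / t^α on (0,∞), with 0 < α < 1 and n a positive integer, satisfies the regularity condition ψ*(t) ≲ (1/t)∫_{t/2}^t ψ(s)ds for all t > 0, where ψ* is the decreasing rearrangement of ψ. -/

import Mathlib

/-!
Since `|cos (n s)| ≤ 1`, the level set `{ψ > t ^ (-α)}` lies in `(0, t)`, so `ψ*(t) ≤ t ^ (-α)`.
On `[t/2, t]` we have `ψ(s) ≥ t ^ (-α) |cos (n s)|`, so it remains to bound
`∫_{x/2}^x |cos u| du` below by `x/400`. Since `|cos| ≥ cos²`, this integral is at least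
`x/4 + sin (x/2) cos (3x/2) / 2`; the oscillating term is nonnegative for `x ≤ π/3`, and beyond
that `|sin (x/2)| ≤ (99/100) x/2` because `sin` is 1-Lipschitz and `sin (π/6) = 1/2 < (99/100) π/6`.
-/

open MeasureTheory Set
open scoped ENNReal

/-- Decreasing rearrangement of `f` with respect to the measure `m`. -/
noncomputable def rearr {α : Type*} [MeasurableSpace α] (m : Measure α) (f : α → ℝ) (t : ℝ) : ℝ :=
  sInf {s : ℝ | 0 ≤ s ∧ m {x | s < |f x|} ≤ ENNReal.ofReal t}

open Real

lemma rearr_le_of_measure_le {β : Type*} [MeasurableSpace β] {m : Measure β} {f : β → ℝ}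
    {s t : ℝ} (hs : 0 ≤ s) (hm : m {x | s < |f x|} ≤ ENNReal.ofReal t) : rearr m f t ≤ s :=
  csInf_le ⟨0, fun _ h => h.1⟩ ⟨hs, hm⟩

lemma rearr_le_rpow_neg {f : ℝ → ℝ} {α t : ℝ} (hα : 0 < α) (ht : 0 < t)
    (hf : ∀ x, 0 < x → |f x| ≤ x ^ (-α)) :
    rearr (volume.restrict (Ioi 0)) f t ≤ t ^ (-α) := by
  refine rearr_le_of_measure_le (rpow_nonneg ht.le _) ?_
  have hsub : {x | t ^ (-α) < |f x|} ∩ Ioi 0 ⊆ Ioo 0 t := fun x ⟨hlt, hx⟩ =>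
    ⟨hx, (rpow_lt_rpow_iff_of_neg ht hx (neg_neg_of_pos hα)).mp (hlt.trans_le (hf x hx))⟩
  rw [Measure.restrict_apply' measurableSet_Ioi]
  exact (measure_mono hsub).trans_eq (by rw [volume_Ioo, sub_zero])

lemma abs_sin_le_of_pi_div_six_le {y : ℝ} (hy : π / 6 ≤ y) : |sin y| ≤ 99 / 100 * y := by
  have hπ := pi_gt_d2
  rcases le_or_gt 2 y with hy2 | hy2
  · linarith [abs_sin_le_one y]
  · have hlip := abs_sin_sub_sin_le y (π / 6)
    rw [sin_pi_div_six, abs_of_nonneg (sub_nonneg.mpr hy)] at hlip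
    have hsin : 0 ≤ sin y := sin_nonneg_of_nonneg_of_le_pi (by linarith) (by linarith)
    rw [abs_of_nonneg hsin]
    linarith [le_abs_self (sin y - 1 / 2)]

lemma integral_cos_sq_from_half (x : ℝ) :
    ∫ u in x / 2..x, cos u ^ 2 = x / 4 + sin (x / 2) * cos (3 * x / 2) / 2 := by
  have h := sin_sub_sin (2 * x) x
  rw [show (2 * x - x) / 2 = x / 2 by ring, show (2 * x + x) / 2 = 3 * x / 2 by ring,
    sin_two_mul] at h
  have h' := sin_two_mul (x / 2)
  rw [mul_div_cancel₀ x two_ne_zero] at h'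
  rw [integral_cos_sq]
  linear_combination (h + h') / 4

lemma div_400_le_integral_abs_cos {x : ℝ} (hx : 0 < x) :
    x / 400 ≤ ∫ u in x / 2..x, |cos u| := by
  have hcos_sq : ∫ u in x / 2..x, cos u ^ 2 ≤ ∫ u in x / 2..x, |cos u| := by
    refine intervalIntegral.integral_mono_on (by linarith)
      ((continuous_cos.pow 2).intervalIntegrable _ _)
      (continuous_cos.abs.intervalIntegrable _ _) fun u _ => ?_
    rw [← sq_abs]
    nlinarith [abs_nonneg (cos u), abs_cos_le_one u]
  have hosc : -(99 / 100 * (x / 2)) ≤ sin (x / 2) * cos (3 * x / 2) := by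
    rcases le_or_gt x (π / 3) with hsmall | hlarge
    · have hsin : 0 ≤ sin (x / 2) :=
        sin_nonneg_of_nonneg_of_le_pi (by linarith) (by linarith [pi_pos])
      have hcos : 0 ≤ cos (3 * x / 2) :=
        cos_nonneg_of_mem_Icc ⟨by linarith [pi_pos], by linarith⟩
      nlinarith
    · calc -(99 / 100 * (x / 2)) ≤ -|sin (x / 2)| :=
            neg_le_neg (abs_sin_le_of_pi_div_six_le (by linarith))
        _ ≤ -|sin (x / 2) * cos (3 * x / 2)| := by
            rw [abs_mul]
            exact neg_le_neg (mul_le_of_le_one_right (abs_nonneg _) (abs_cos_le_one _))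
        _ ≤ _ := neg_abs_le _
  rw [integral_cos_sq_from_half] at hcos_sq
  linarith

lemma div_400_le_integral_abs_cos_mul {N t : ℝ} (hN : 0 < N) (ht : 0 < t) :
    t / 400 ≤ ∫ s in t / 2..t, |cos (N * s)| := by
  rw [intervalIntegral.integral_comp_mul_left (fun u => |cos u|) hN.ne', smul_eq_mul,
    show N * (t / 2) = N * t / 2 by ring, le_inv_mul_iff₀ hN]
  calc N * (t / 400) = N * t / 400 := by ring
    _ ≤ _ := div_400_le_integral_abs_cos (mul_pos hN ht)

lemma rpow_neg_mul_integral_le_integral_div_rpow {g : ℝ → ℝ} (hg : Continuous g)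
    (hg0 : ∀ s, 0 ≤ g s) {α t : ℝ} (hα : 0 ≤ α) (ht : 0 < t) :
    t ^ (-α) * ∫ s in t / 2..t, g s ≤ ∫ s in t / 2..t, g s / s ^ α := by
  have hpos : ∀ s ∈ uIcc (t / 2) t, 0 < s := fun s hs => by
    rw [uIcc_of_le (by linarith)] at hs
    linarith [hs.1]
  rw [← intervalIntegral.integral_const_mul]
  refine intervalIntegral.integral_mono_on (by linarith)
    ((continuous_const.mul hg).intervalIntegrable _ _)
    (ContinuousOn.intervalIntegrable (hg.continuousOn.div
      (fun s hs => (continuousAt_rpow_const s α (Or.inl (hpos s hs).ne')).continuousWithinAt)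
      fun s hs => (rpow_pos_of_pos (hpos s hs) α).ne')) fun s hs => ?_
  rw [rpow_neg ht.le, ← div_eq_inv_mul]
  exact div_le_div_of_nonneg_left (hg0 s) (rpow_pos_of_pos (by linarith [hs.1]) α)
    (rpow_le_rpow (by linarith [hs.1]) hs.2 hα)

theorem stmt11_general (n : ℕ) (hn : 0 < n) (α : ℝ) (hα0 : 0 < α) :
    ∃ C : ℝ, 0 < C ∧ ∀ t : ℝ, 0 < t →
      rearr (volume.restrict (Set.Ioi 0)) (fun s => |Real.cos (n * s)| / s ^ α) t ≤
        C * ((1 / t) * ∫ s in (t / 2)..t, |Real.cos (n * s)| / s ^ α) := by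
  refine ⟨400, by norm_num, fun t ht => ?_⟩
  have hrearr : rearr (volume.restrict (Ioi 0)) (fun s => |cos (n * s)| / s ^ α) t
      ≤ t ^ (-α) := rearr_le_rpow_neg hα0 ht fun x hx => by
    rw [abs_div, abs_abs, abs_of_pos (rpow_pos_of_pos hx α), rpow_neg hx.le, ← one_div]
    exact div_le_div_of_nonneg_right (abs_cos_le_one _) (rpow_nonneg hx.le α)
  have havg : t ^ (-α) * (t / 400) ≤ ∫ s in t / 2..t, |cos (n * s)| / s ^ α :=
    (mul_le_mul_of_nonneg_left (div_400_le_integral_abs_cos_mul (Nat.cast_pos.mpr hn) ht)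
      (rpow_nonneg ht.le _)).trans
      (rpow_neg_mul_integral_le_integral_div_rpow (by fun_prop)
        (fun _ => abs_nonneg _) hα0.le ht)
  calc _ ≤ t ^ (-α) := hrearr
    _ = 400 * ((1 / t) * (t ^ (-α) * (t / 400))) := by field_simp
    _ ≤ _ := by gcongr

theorem stmt11 (n : ℕ) (hn : 0 < n) (α : ℝ) (hα0 : 0 < α) (hα1 : α < 1) :
    ∃ C : ℝ, 0 < C ∧ ∀ t : ℝ, 0 < t →
      rearr (volume.restrict (Set.Ioi 0)) (fun s => |Real.cos (n * s)| / s ^ α) t ≤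
        C * ((1 / t) * ∫ s in (t / 2)..t, |Real.cos (n * s)| / s ^ α) :=
  stmt11_general n hn α hα0
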